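/- arXiv:1210.3932 — 3 statements merged into one kernel-verified Lean document; each statement's English description precedes it below -/
import Mathlib

section
/- For any function f from [a,b] to a metric space (E,ρ), any c > 0, and any function g : [a,b] → E with sup_{t∈[a,b]} ρ(f(t),g(t)) ≤ c/2, the total variation of g is at least the truncated variation of f at level c: TV(g,[a,b]) ≥ TV^c(f,[a,b]). -/
open Set Filter

/-- A finite partition `t 0 < t 1 < ... < t n` of points in `[a, b]`. -/
def IsPart (a b : ℝ) (n : ℕ) (t : ℕ → ℝ) : Prop :=
  a ≤ t 0 ∧ t n ≤ b ∧ ∀ i < n, t i < t (i + 1)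

/-- Total variation of `f` on `[a, b]`. -/
noncomputable def TVar {E : Type*} [PseudoMetricSpace E] (f : ℝ → E) (a b : ℝ) : ENNReal :=
  ⨆ (n : ℕ) (t : ℕ → ℝ) (_ : IsPart a b n t),
    ∑ i ∈ Finset.range n, ENNReal.ofReal (dist (f (t (i + 1))) (f (t i)))

/-- Truncated variation of `f` at level `c` on `[a, b]`. -/
noncomputable def TVc {E : Type*} [PseudoMetricSpace E] (f : ℝ → E) (c a b : ℝ) : ENNReal :=
  ⨆ (n : ℕ) (t : ℕ → ℝ) (_ : IsPart a b n t),
    ∑ i ∈ Finset.range n, ENNReal.ofReal (dist (f (t (i + 1))) (f (t i)) - c)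

/-- Upward truncated variation. -/
noncomputable def UTVc (f : ℝ → ℝ) (c a b : ℝ) : ENNReal :=
  ⨆ (n : ℕ) (t : ℕ → ℝ) (_ : IsPart a b n t),
    ∑ i ∈ Finset.range n, ENNReal.ofReal (f (t (i + 1)) - f (t i) - c)

/-- Downward truncated variation. -/
noncomputable def DTVc (f : ℝ → ℝ) (c a b : ℝ) : ENNReal :=
  ⨆ (n : ℕ) (t : ℕ → ℝ) (_ : IsPart a b n t),
    ∑ i ∈ Finset.range n, ENNReal.ofReal (f (t i) - f (t (i + 1)) - c)

/-- `f` is càdlàg on `[a, b]`: right-continuous on `[a, b)`, with left limits on `(a, b]`. -/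
def Cadlag {E : Type*} [TopologicalSpace E] (f : ℝ → E) (a b : ℝ) : Prop :=
  (∀ t ∈ Set.Ico a b, Tendsto f (nhdsWithin t (Set.Ioi t)) (nhds (f t))) ∧
  (∀ t ∈ Set.Ioc a b, ∃ l, Tendsto f (nhdsWithin t (Set.Iio t)) (nhds l))

theorem IsPart.mem_Icc {a b : ℝ} {n : ℕ} {t : ℕ → ℝ} (ht : IsPart a b n t) {i : ℕ}
    (hi : i ≤ n) : t i ∈ Icc a b := by
  obtain ⟨h0, hn, hlt⟩ := ht
  have hmono : MonotoneOn t (Iic n) := (strictMonoOn_Iic_of_lt_succ hlt).monotoneOn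
  exact ⟨h0.trans (hmono (Nat.zero_le n) hi (Nat.zero_le i)),
    (hmono hi (le_refl n) hi).trans hn⟩

theorem dist_sub_add_le_of_dist_le {E : Type*} [PseudoMetricSpace E] {x y x' y' : E}
    {r s : ℝ} (hx : dist x x' ≤ r) (hy : dist y y' ≤ s) : dist x y - (r + s) ≤ dist x' y' := by
  have := dist_triangle4 x x' y' y
  rw [dist_comm y' y] at this
  linarith

theorem tv_ge_tvc_general {E : Type*} [PseudoMetricSpace E] (a b : ℝ)
    (f g : ℝ → E) (c : ℝ)
    (hg : ∀ t ∈ Set.Icc a b, dist (f t) (g t) ≤ c / 2) :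
    TVc f c a b ≤ TVar g a b := by
  refine iSup_mono fun n => iSup₂_mono fun t ht => Finset.sum_le_sum fun i hi => ?_
  have hi : i < n := Finset.mem_range.mp hi
  refine ENNReal.ofReal_le_ofReal ?_
  rw [← add_halves c]
  exact dist_sub_add_le_of_dist_le (hg _ (ht.mem_Icc hi)) (hg _ (ht.mem_Icc hi.le))

/-- Any `g` uniformly within `c/2` of `f` has total variation at least the
truncated variation of `f` at level `c`. -/
theorem tv_ge_tvc {E : Type*} [PseudoMetricSpace E] (a b : ℝ) (hab : a < b)
    (f g : ℝ → E) (c : ℝ) (hc : 0 < c)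
    (hg : ∀ t ∈ Set.Icc a b, dist (f t) (g t) ≤ c / 2) :
    TVc f c a b ≤ TVar g a b :=
  tv_ge_tvc_general a b f g c hg
end

section
/- For every càdlàg function f : [a,b] → E into a metric space and every c > 0, the truncated variation TV^c(f,[a,b]) is finite. -/
open Set Filter

/-!
For `ε > 0`, a càdlàg function admits a finite set `S` of cut points such that `f` moves by less
than `ε` between any two points of `[a, b]` not separated by a cut. Such an `S` exists by real
induction: the supremum of the endpoints `r` for which `[a, r]` admits one is itself such an
endpoint thanks to the left limit there, and right-continuity lets one go beyond it unless it is
`b`. The cuts bound `f` on `[a, b]` by some `M`, and in any partition every increment of size at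
least `c = ε` straddles its own cut point, so at most `#S` terms of the truncated variation are
nonzero, each at most `2M`.
-/

open Topology

section

variable {E : Type*} [PseudoMetricSpace E]

namespace IsPart

variable {a b : ℝ} {n : ℕ} {t : ℕ → ℝ}

lemma monotoneOn (ht : IsPart a b n t) : MonotoneOn t (Iic n) :=
  (strictMonoOn_Iic_of_lt_succ ht.2.2).monotoneOn

lemma mem_Icc_s2 (ht : IsPart a b n t) {i : ℕ} (hi : i ≤ n) : t i ∈ Icc a b :=
  ⟨ht.1.trans (ht.monotoneOn (Nat.zero_le n) hi (Nat.zero_le i)),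
    (ht.monotoneOn hi self_mem_Iic hi).trans ht.2.1⟩

end IsPart

/-- `S` cuts `[a, r]` into intervals `[s, s')` on each of which `f` oscillates less than `ε`. -/
def SeparatesJumps (f : ℝ → E) (ε a r : ℝ) (S : Finset ℝ) : Prop :=
  ∀ x y, a ≤ x → x < y → y ≤ r → ε ≤ dist (f x) (f y) → ∃ s ∈ S, x < s ∧ s ≤ y

namespace SeparatesJumps

variable {f : ℝ → E} {ε a r : ℝ}

lemma of_le (hr : r ≤ a) (S : Finset ℝ) : SeparatesJumps f ε a r S :=
  fun _ _ hx hxy hy _ => absurd (hx.trans_lt hxy) (not_lt.2 (hy.trans hr))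

lemma extend {S : Finset ℝ} {v : ℝ} (hS : SeparatesJumps f ε a r S) (p : E)
    (hp : ∀ z ∈ Ico r v, dist (f z) p < ε / 2) :
    SeparatesJumps f ε a v (insert r (insert v S)) := by
  intro x y hx hxy hy hjump
  by_cases hyr : y ≤ r
  · obtain ⟨s, hs, hxs, hsy⟩ := hS x y hx hxy hyr hjump
    exact ⟨s, by simp [hs], hxs, hsy⟩
  by_cases hxr : x < r
  · exact ⟨r, by simp, hxr, (not_le.1 hyr).le⟩
  by_cases hyv : y < v
  · have := dist_triangle_right (f x) (f y) p
    have := hp x ⟨not_lt.1 hxr, hxy.trans hyv⟩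
    have := hp y ⟨(not_lt.1 hxr).trans hxy.le, hyv⟩
    linarith
  · exact ⟨v, by simp, hxy.trans_le hy, not_lt.1 hyv⟩

lemma dist_le_sum {S : Finset ℝ} (hS : SeparatesJumps f ε a r S) (hε : 0 ≤ ε) {x : ℝ}
    (hx : x ∈ Icc a r) :
    dist (f x) (f a) ≤ ε + ∑ s ∈ S, dist (f s) (f a) := by
  set T := insert a (S.filter (· ≤ x))
  set s := T.max' ⟨a, Finset.mem_insert_self _ _⟩
  have has : a ≤ s := T.le_max' a (Finset.mem_insert_self _ _)
  have hsT : s ∈ T := T.max'_mem _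
  have hsx : s ≤ x := by
    rcases Finset.mem_insert.1 hsT with h | h
    · exact h ▸ hx.1
    · exact (Finset.mem_filter.1 h).2
  have hxs : dist (f x) (f s) ≤ ε := by
    rcases hsx.eq_or_lt with h | h
    · rw [← h, dist_self]
      exact hε
    by_contra! hjump
    rw [dist_comm] at hjump
    obtain ⟨p, hp, hsp, hpx⟩ := hS s x has h hx.2 hjump.le
    have : p ≤ s := T.le_max' p (Finset.mem_insert_of_mem (Finset.mem_filter.2 ⟨hp, hpx⟩))
    linarith
  have hsa : dist (f s) (f a) ≤ ∑ s ∈ S, dist (f s) (f a) := by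
    rcases Finset.mem_insert.1 hsT with h | h
    · rw [h, dist_self]
      exact Finset.sum_nonneg fun _ _ => dist_nonneg
    · exact Finset.single_le_sum (f := fun s => dist (f s) (f a)) (fun _ _ => dist_nonneg)
        (Finset.mem_filter.1 h).1
  linarith [dist_triangle (f x) (f s) (f a)]

lemma sum_le_card_mul {S : Finset ℝ} (hS : SeparatesJumps f ε a r S) {M : ℝ}
    (hM : ∀ x ∈ Icc a r, dist (f x) (f a) ≤ M) {n : ℕ} {t : ℕ → ℝ} (ht : IsPart a r n t) :
    ∑ i ∈ Finset.range n, ENNReal.ofReal (dist (f (t (i + 1))) (f (t i)) - ε) ≤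
      S.card * ENNReal.ofReal (2 * M - ε) := by
  classical
  set B := (Finset.range n).filter fun i => ε ≤ dist (f (t (i + 1))) (f (t i))
  have hcard : B.card ≤ S.card := by
    have hcut : ∀ i ∈ B, ∃ s ∈ S, t i < s ∧ s ≤ t (i + 1) := fun i hi => by
      obtain ⟨hi, hjump⟩ := Finset.mem_filter.1 hi
      have hi := Finset.mem_range.1 hi
      exact hS _ _ (ht.mem_Icc_s2 hi.le).1 (ht.2.2 i hi) (ht.mem_Icc_s2 hi).2 (by rwa [dist_comm])
    -- the intervals `(t i, t (i + 1)]` are disjoint, so distinct jumps use distinct cuts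
    choose! φ hφS hφ using hcut
    refine Finset.card_le_card_of_injOn φ hφS fun i hi j hj hij => ?_
    by_contra hne
    wlog hlt : i < j generalizing i j
    · exact this j hj i hi hij.symm (Ne.symm hne) ((not_lt.1 hlt).lt_of_ne (Ne.symm hne))
    have hj' := Finset.mem_range.1 (Finset.mem_filter.1 hj).1
    have : t (i + 1) ≤ t j :=
      ht.monotoneOn (mem_Iic.2 (hlt.trans hj')) (mem_Iic.2 hj'.le) (Nat.succ_le_of_lt hlt)
    linarith [(hφ i hi).2, (hφ j hj).1]
  calc ∑ i ∈ Finset.range n, ENNReal.ofReal (dist (f (t (i + 1))) (f (t i)) - ε)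
      = ∑ i ∈ B, ENNReal.ofReal (dist (f (t (i + 1))) (f (t i)) - ε) := by
        refine (Finset.sum_filter_of_ne fun i _ h => ?_).symm
        linarith [mt ENNReal.ofReal_eq_zero.2 h]
    _ ≤ ∑ i ∈ B, ENNReal.ofReal (2 * M - ε) := by
        refine Finset.sum_le_sum fun i hi => ENNReal.ofReal_le_ofReal ?_
        have hi := Finset.mem_range.1 (Finset.mem_filter.1 hi).1
        linarith [dist_triangle_right (f (t (i + 1))) (f (t i)) (f a),
          hM _ (ht.mem_Icc_s2 hi), hM _ (ht.mem_Icc_s2 hi.le)]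
    _ = B.card * ENNReal.ofReal (2 * M - ε) := by rw [Finset.sum_const, nsmul_eq_mul]
    _ ≤ S.card * ENNReal.ofReal (2 * M - ε) := by gcongr

end SeparatesJumps

lemma Cadlag.exists_separatesJumps {f : ℝ → E} {a b ε : ℝ} (hf : Cadlag f a b) (hab : a ≤ b)
    (hε : 0 < ε) : ∃ S, SeparatesJumps f ε a b S := by
  set A := {r | r ≤ b ∧ ∃ S, SeparatesJumps f ε a r S}
  have haA : a ∈ A := ⟨hab, ∅, .of_le le_rfl ∅⟩
  have hbdd : BddAbove A := ⟨b, fun r hr => hr.1⟩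
  set u := sSup A
  have hau : a ≤ u := le_csSup hbdd haA
  have hub : u ≤ b := csSup_le ⟨a, haA⟩ fun r hr => hr.1
  have hu : ∃ S, SeparatesJumps f ε a u S := by
    rcases hau.eq_or_lt with h | hau
    · exact ⟨∅, .of_le h.ge ∅⟩
    obtain ⟨l, hl⟩ := hf.2 u ⟨hau, hub⟩
    obtain ⟨w, hwu, hw⟩ :=
      mem_nhdsLT_iff_exists_Ioo_subset.1 (hl (Metric.ball_mem_nhds l (half_pos hε)))
    obtain ⟨r, ⟨-, S, hS⟩, hwr⟩ := exists_lt_of_lt_csSup ⟨a, haA⟩ hwu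
    exact ⟨_, hS.extend l fun z hz => hw ⟨hwr.trans_le hz.1, hz.2⟩⟩
  rcases hub.eq_or_lt with hub | hub
  · exact hub ▸ hu
  obtain ⟨S, hS⟩ := hu
  have hrc : Tendsto f (𝓝[≥] u) (𝓝 (f u)) :=
    continuousWithinAt_Ioi_iff_Ici.1 (hf.1 u ⟨hau, hub⟩)
  obtain ⟨w, huw, hw⟩ :=
    mem_nhdsGE_iff_exists_Ico_subset.1 (hrc (Metric.ball_mem_nhds (f u) (half_pos hε)))
  have hv : min b w ∈ A :=
    ⟨min_le_left _ _, _, hS.extend (f u) fun z hz => hw ⟨hz.1, hz.2.trans_le (min_le_right _ _)⟩⟩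
  exact absurd (le_csSup hbdd hv) (not_le.2 (lt_min hub huw))

end

/-- The truncated variation of a càdlàg function is finite. -/
theorem tvc_lt_top {E : Type*} [MetricSpace E] (a b : ℝ) (hab : a < b)
    (f : ℝ → E) (hf : Cadlag f a b) (c : ℝ) (hc : 0 < c) :
    TVc f c a b < ⊤ := by
  obtain ⟨S, hS⟩ := hf.exists_separatesJumps hab.le hc
  have hM : ∀ x ∈ Icc a b, dist (f x) (f a) ≤ c + ∑ s ∈ S, dist (f s) (f a) :=
    fun x hx => hS.dist_le_sum hc.le hx
  calc TVc f c a b ≤ S.card * ENNReal.ofReal (2 * (c + ∑ s ∈ S, dist (f s) (f a)) - c) :=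
        iSup_le fun n => iSup₂_le fun t ht => hS.sum_le_card_mul hM ht
    _ < ⊤ := ENNReal.mul_lt_top (ENNReal.natCast_lt_top _) ENNReal.ofReal_lt_top
end

section
/- For a càdlàg function f : [a,b] → ℝ and c > 0, inf{ TV(f + h, [a,b]) : h : [a,b] → ℝ, ‖h‖_osc ≤ c } = TV^c(f,[a,b]), where ‖h‖_osc = sup_{s,u∈[a,b]} |h(s) − h(u)|. Moreover the infimum is attained. -/
open Set Filter

open scoped ENNReal

/-!
The lower bound is the triangle inequality: on every step of a partition,
`|Δf| - c ≤ |Δ(f + h)|` as soon as `h` oscillates by at most `c`.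

For attainment let `U t` and `D t` be the upward and downward truncated variations of `f` on
`[a, t]`, and take `f + h := U - D`. As `U` and `D` are nondecreasing, its total variation is at
most `U b + D b`, and `U b + D b ≤ TV^c(f)`: a positive up-step and a positive down-step taken
from two partitions can, when they overlap, be traded for steps of one partition without losing
truncated increment.
The oscillation bound for `h = U - D - f` is a pair of corridor inequalities: cutting a
down-partition of `[a, t]` at `s`, the gaps between its positive down-steps after `s` form an
up-chain from `s` to `t`, whence `D(a,t) - D(a,s) + f t - f s - c ≤ U(a,t) - U(a,s)`; the other
one is the same statement for `-f`. If `TV^c(f) = ∞`, then `h = 0` works by the lower bound.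
-/

def seqCons (x : ℝ) (t : ℕ → ℝ) : ℕ → ℝ
  | 0 => x
  | i + 1 => t i

namespace IsPart

variable {α β : ℝ} {n : ℕ} {t : ℕ → ℝ}

theorem lt (h : IsPart α β n t) {i : ℕ} (hi : i < n) : t i < t (i + 1) := h.2.2 i hi

theorem mono (h : IsPart α β n t) {i j : ℕ} (hij : i ≤ j) (hj : j ≤ n) : t i ≤ t j := by
  induction j, hij using Nat.le_induction with
  | base => rfl
  | succ j _ ih => exact (ih (by omega)).trans (h.lt (by omega)).le

theorem mem (h : IsPart α β n t) {i : ℕ} (hi : i ≤ n) : t i ∈ Set.Icc α β :=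
  ⟨h.1.trans (h.mono (Nat.zero_le i) hi), (h.mono hi le_rfl).trans h.2.1⟩

theorem of_left_le {α' : ℝ} (h : IsPart α β n t) (hα : α' ≤ t 0) : IsPart α' β n t :=
  ⟨hα, h.2⟩

theorem tail (h : IsPart α β (n + 1) t) : IsPart (t 1) β n (fun i => t (i + 1)) :=
  ⟨le_rfl, h.2.1, fun i hi => h.lt (by omega)⟩

theorem cons {x : ℝ} (h : IsPart α β n t) (hx : x < t 0) : IsPart x β (n + 1) (seqCons x t) :=
  ⟨le_rfl, h.2.1, fun i hi => by cases i with
    | zero => exact hx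
    | succ i => exact h.lt (by omega)⟩

end IsPart

noncomputable def partSum (W : ℝ → ℝ → ℝ) (t : ℕ → ℝ) (n : ℕ) : ℝ≥0∞ :=
  ∑ i ∈ Finset.range n, ENNReal.ofReal (W (t i) (t (i + 1)))

noncomputable def partVar (W : ℝ → ℝ → ℝ) (α β : ℝ) : ℝ≥0∞ :=
  ⨆ (n : ℕ) (t : ℕ → ℝ) (_ : IsPart α β n t), partSum W t n

section PartitionVariation

variable {W W' : ℝ → ℝ → ℝ} {α β : ℝ} {n : ℕ} {t : ℕ → ℝ}

@[simp] theorem partSum_zero : partSum W t 0 = 0 := by simp [partSum]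

theorem partSum_succ :
    partSum W t (n + 1) = ENNReal.ofReal (W (t 0) (t 1)) + partSum W (fun i => t (i + 1)) n := by
  rw [partSum, Finset.sum_range_succ', add_comm]; rfl

theorem partSum_seqCons (x : ℝ) :
    partSum W (seqCons x t) (n + 1) = ENNReal.ofReal (W x (t 0)) + partSum W t n :=
  partSum_succ

theorem partSum_ne_top : partSum W t n ≠ ⊤ :=
  ENNReal.sum_ne_top.2 fun _ _ => ENNReal.ofReal_ne_top

theorem partSum_le_partVar (h : IsPart α β n t) : partSum W t n ≤ partVar W α β :=
  le_iSup₂_of_le n t (le_iSup_of_le h le_rfl)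

theorem partVar_le {d : ℝ≥0∞} (h : ∀ n t, IsPart α β n t → partSum W t n ≤ d) :
    partVar W α β ≤ d :=
  iSup_le fun n => iSup_le fun t => iSup_le fun ht => h n t ht

theorem partVar_mono {α' β' : ℝ} (hα : α ≤ α') (hβ : β' ≤ β) :
    partVar W α' β' ≤ partVar W α β :=
  partVar_le fun _ _ ht => partSum_le_partVar ⟨hα.trans ht.1, ht.2.1.trans hβ, ht.2.2⟩

theorem partVar_mono_weight (h : ∀ x y, W x y ≤ W' x y) :
    partVar W α β ≤ partVar W' α β :=
  partVar_le fun _ _ ht =>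
    (Finset.sum_le_sum fun _ _ => ENNReal.ofReal_le_ofReal (h _ _)).trans (partSum_le_partVar ht)

theorem add_partVar_le {a d : ℝ≥0∞} (h0 : a ≤ d)
    (h : ∀ n t, IsPart α β n t → a + partSum W t n ≤ d) : a + partVar W α β ≤ d := by
  simp only [partVar, ENNReal.add_iSup]
  refine iSup_le fun n => iSup_le fun t => ?_
  by_cases ht : IsPart α β n t
  · simpa [iSup_pos ht] using h n t ht
  · simpa [iSup_neg ht] using h0

theorem ofReal_add_partVar_le (hW : ∀ x, W x x ≤ 0) {x y : ℝ} (hx : α ≤ x) (hxy : x ≤ y)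
    (hy : y ≤ β) : ENNReal.ofReal (W x y) + partVar W y β ≤ partVar W α β := by
  rcases hxy.eq_or_lt with rfl | hxy
  · simpa [ENNReal.ofReal_of_nonpos (hW x)] using partVar_mono hx le_rfl
  refine add_partVar_le ?_ fun n t ht => ?_
  · have : IsPart α β 1 (seqCons x fun _ => y) :=
      (IsPart.cons ⟨le_rfl, hy, by simp⟩ hxy).of_left_le hx
    simpa [partSum_seqCons] using partSum_le_partVar (W := W) this
  rcases ht.1.eq_or_lt with hy0 | hy0
  · rw [hy0, ← partSum_seqCons]
    exact partSum_le_partVar ((ht.cons (hy0 ▸ hxy)).of_left_le hx)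
  · calc ENNReal.ofReal (W x y) + partSum W t n
        ≤ ENNReal.ofReal (W x y) + (ENNReal.ofReal (W y (t 0)) + partSum W t n) := by
          gcongr; exact le_add_self
      _ = partSum W (seqCons x (seqCons y t)) (n + 1 + 1) := by
          rw [partSum_seqCons, partSum_seqCons]; rfl
      _ ≤ partVar W α β := partSum_le_partVar (((ht.cons hy0).cons hxy).of_left_le hx)

theorem partSum_add_partVar_le (hW : ∀ x, W x x ≤ 0) {γ : ℝ} :
    ∀ n t, IsPart α γ n t → t n ≤ β →
      partSum W t n + partVar W (t n) β ≤ partVar W α β := by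
  intro n
  induction n generalizing α with
  | zero => intro t ht _; simpa using partVar_mono ht.1 le_rfl
  | succ n ih =>
    intro t ht htβ
    rw [partSum_succ, add_assoc]
    calc _ ≤ ENNReal.ofReal (W (t 0) (t 1)) + partVar W (t 1) β := by
          gcongr; exact ih _ ht.tail htβ
      _ ≤ partVar W α β := ofReal_add_partVar_le hW ht.1 (ht.lt (Nat.succ_pos n)).le
            ((ht.mono (by omega) le_rfl).trans htβ)

theorem partVar_add_partVar_le (hW : ∀ x, W x x ≤ 0) {γ : ℝ} (hαγ : α ≤ γ)
    (hγβ : γ ≤ β) :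
    partVar W α γ + partVar W γ β ≤ partVar W α β := by
  rw [add_comm]
  refine add_partVar_le (partVar_mono hαγ le_rfl) fun n t ht => ?_
  rw [add_comm]
  exact (add_le_add_right (partVar_mono ht.2.1 le_rfl) _).trans
    (partSum_add_partVar_le hW n t ht (ht.2.1.trans hγβ))

theorem add_toReal_partVar_le (hW : ∀ x, W x x ≤ 0) (hfin : partVar W α β ≠ ⊤)
    {x y z : ℝ} (hx : α ≤ x) (hxy : x ≤ y) (hyz : y ≤ z) (hz : z ≤ β) :
    W x y + (partVar W z β).toReal ≤ (partVar W α β).toReal := by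
  have hzfin : partVar W z β ≠ ⊤ :=
    ne_top_of_le_ne_top hfin (partVar_mono (hx.trans (hxy.trans hyz)) le_rfl)
  have h := ENNReal.toReal_mono hfin
    ((add_le_add_right (partVar_mono hyz le_rfl) _).trans
      (ofReal_add_partVar_le hW hx hxy (hyz.trans hz)))
  rw [ENNReal.toReal_add ENNReal.ofReal_ne_top hzfin, ENNReal.toReal_ofReal'] at h
  exact (add_le_add_left (le_max_left _ _) _).trans h

theorem toReal_partVar_le {R : ℝ} (hαβ : α ≤ β)
    (h : ∀ n t, IsPart α β n t → (partSum W t n).toReal ≤ R) :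
    (partVar W α β).toReal ≤ R := by
  have hR : 0 ≤ R := by simpa using h 0 (fun _ => α) ⟨le_rfl, hαβ, by simp⟩
  exact ENNReal.toReal_le_of_le_ofReal hR <| partVar_le fun n t ht =>
    (ENNReal.le_ofReal_iff_toReal_le partSum_ne_top hR).2 (h n t ht)

end PartitionVariation

section Increments

variable (f : ℝ → ℝ) (c : ℝ)

def upIncr (x y : ℝ) : ℝ := f y - f x - c

def downIncr (x y : ℝ) : ℝ := f x - f y - c

def absIncr (x y : ℝ) : ℝ := dist (f y) (f x) - c

theorem UTVc_eq_partVar (a b : ℝ) : UTVc f c a b = partVar (upIncr f c) a b := rfl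

theorem DTVc_eq_partVar (a b : ℝ) : DTVc f c a b = partVar (downIncr f c) a b := rfl

theorem TVc_eq_partVar (a b : ℝ) : TVc f c a b = partVar (absIncr f c) a b := rfl

theorem upIncr_neg : upIncr (-f) c = downIncr f c := by
  ext x y; simp only [upIncr, downIncr, Pi.neg_apply]; ring

theorem downIncr_neg : downIncr (-f) c = upIncr f c := by
  ext x y; simp only [upIncr, downIncr, Pi.neg_apply]; ring

theorem absIncr_neg : absIncr (-f) c = absIncr f c := by
  ext x y; simp only [absIncr, Pi.neg_apply, dist_neg_neg]

theorem UTVc_neg (a b : ℝ) : UTVc (-f) c a b = DTVc f c a b := by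
  rw [UTVc_eq_partVar, upIncr_neg]; rfl

theorem DTVc_neg (a b : ℝ) : DTVc (-f) c a b = UTVc f c a b := by
  rw [DTVc_eq_partVar, downIncr_neg]; rfl

variable {f c}

theorem upIncr_le_absIncr (x y : ℝ) : upIncr f c x y ≤ absIncr f c x y :=
  sub_le_sub_right ((le_abs_self _).trans (Real.dist_eq _ _).ge) c

theorem downIncr_le_absIncr (x y : ℝ) : downIncr f c x y ≤ absIncr f c x y := by
  rw [← upIncr_neg, ← absIncr_neg]; exact upIncr_le_absIncr x y

theorem upIncr_self_nonpos (hc : 0 ≤ c) (x : ℝ) : upIncr f c x x ≤ 0 := by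
  simp [upIncr, hc]

theorem downIncr_self_nonpos (hc : 0 ≤ c) (x : ℝ) : downIncr f c x x ≤ 0 := by
  simp [downIncr, hc]

theorem absIncr_self_nonpos (hc : 0 ≤ c) (x : ℝ) : absIncr f c x x ≤ 0 := by
  simp [absIncr, hc]

end Increments

section Corridor

variable {f : ℝ → ℝ} {c : ℝ}

/-- The gaps between the positive down-steps of `q` form an up-chain from `x` to `t`. -/
theorem toReal_partSum_downIncr_add_le (hc : 0 ≤ c) {t : ℝ} :
    ∀ m x q, IsPart x t m q → partVar (upIncr f c) x t ≠ ⊤ →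
      (partSum (downIncr f c) q m).toReal + (f t - f x - c) ≤
        (partVar (upIncr f c) x t).toReal := by
  intro m
  induction m with
  | zero =>
    intro x q hq hU
    have := add_toReal_partVar_le (upIncr_self_nonpos hc) hU le_rfl (hq.1.trans hq.2.1)
      le_rfl le_rfl
    simp only [upIncr] at this
    simpa using this.trans' (le_add_of_nonneg_right ENNReal.toReal_nonneg)
  | succ m ih =>
    intro x q hq hU
    have hq0 := hq.mem (Nat.zero_le _)
    have hq1 := hq.mem (by omega : 1 ≤ m + 1)
    rw [partSum_succ]
    rcases le_or_gt (downIncr f c (q 0) (q 1)) 0 with hneg | hpos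
    · rw [ENNReal.ofReal_of_nonpos hneg, zero_add]
      exact ih x _ (hq.tail.of_left_le hq1.1) hU
    rw [ENNReal.toReal_add ENNReal.ofReal_ne_top partSum_ne_top, ENNReal.toReal_ofReal hpos.le]
    have h1 := ih (q 1) _ hq.tail (ne_top_of_le_ne_top hU (partVar_mono hq1.1 le_rfl))
    have h2 := add_toReal_partVar_le (upIncr_self_nonpos hc) hU le_rfl hq0.1 (hq.lt (by omega)).le
      hq1.2
    simp only [upIncr, downIncr] at h1 h2 ⊢
    linarith

theorem toReal_partSum_downIncr_le (hc : 0 ≤ c) {s t : ℝ} (hst : s ≤ t)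
    (hU : partVar (upIncr f c) s t ≠ ⊤) :
    ∀ m x q, x ≤ s → IsPart x t m q → partVar (downIncr f c) x s ≠ ⊤ →
      (partSum (downIncr f c) q m).toReal ≤
        (partVar (downIncr f c) x s).toReal + (partVar (upIncr f c) s t).toReal -
          (f t - f s - c) := by
  have hUst : f t - f s - c ≤ (partVar (upIncr f c) s t).toReal := by
    simpa using toReal_partSum_downIncr_add_le hc 0 s (fun _ => s) ⟨le_rfl, hst, by simp⟩ hU
  intro m
  induction m with
  | zero =>
    intro x q _ _ _
    simp only [partSum_zero, ENNReal.toReal_zero]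
    linarith [ENNReal.toReal_nonneg (a := partVar (downIncr f c) x s)]
  | succ m ih =>
    intro x q hxs hq hD
    have hD0 := ENNReal.toReal_nonneg (a := partVar (downIncr f c) x s)
    rcases le_or_gt s (q 0) with hsq | hqs
    · have := toReal_partSum_downIncr_add_le hc _ s q (hq.of_left_le hsq) hU
      linarith
    have hq0 := hq.mem (Nat.zero_le _)
    have hq1 := hq.mem (by omega : 1 ≤ m + 1)
    rw [partSum_succ]
    rcases le_or_gt (downIncr f c (q 0) (q 1)) 0 with hneg | hpos
    · rw [ENNReal.ofReal_of_nonpos hneg, zero_add]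
      exact ih x _ hxs (hq.tail.of_left_le hq1.1) hD
    rw [ENNReal.toReal_add ENNReal.ofReal_ne_top partSum_ne_top, ENNReal.toReal_ofReal hpos.le]
    rcases le_or_gt (q 1) s with hq1s | hsq1
    · have h1 := ih (q 1) _ hq1s hq.tail (ne_top_of_le_ne_top hD (partVar_mono hq1.1 le_rfl))
      have h2 := add_toReal_partVar_le (downIncr_self_nonpos hc) hD hq0.1 (hq.lt (by omega)).le
        le_rfl hq1s
      linarith
    · -- the first step straddles `s`; cut there, only its part before `s` is truncated
      have h1 := toReal_partSum_downIncr_add_le hc m (q 1) _ hq.tail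
        (ne_top_of_le_ne_top hU (partVar_mono hsq1.le le_rfl))
      have h2 := add_toReal_partVar_le (downIncr_self_nonpos hc) hD hq0.1 hqs.le le_rfl le_rfl
      have h3 := ENNReal.toReal_mono hU (partVar_mono (W := upIncr f c) hsq1.le (le_refl t))
      have hcut : downIncr f c (q 0) (q 1) = downIncr f c (q 0) s + (f s - f (q 1)) := by
        simp only [downIncr]; ring
      linarith [ENNReal.toReal_nonneg (a := partVar (downIncr f c) s s)]

theorem toReal_DTVc_sub_le (hc : 0 ≤ c) {a s t : ℝ} (has : a ≤ s) (hst : s ≤ t)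
    (hU : UTVc f c a t ≠ ⊤) (hD : DTVc f c a t ≠ ⊤) :
    (DTVc f c a t).toReal - (DTVc f c a s).toReal + (f t - f s) - c ≤
      (UTVc f c a t).toReal - (UTVc f c a s).toReal := by
  simp only [UTVc_eq_partVar, DTVc_eq_partVar] at *
  have hUst : partVar (upIncr f c) s t ≠ ⊤ := ne_top_of_le_ne_top hU (partVar_mono has le_rfl)
  have hsplit := toReal_partVar_le (has.trans hst) fun m q hq =>
    toReal_partSum_downIncr_le hc hst hUst m a q has hq
      (ne_top_of_le_ne_top hD (partVar_mono le_rfl hst))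
  have hsuper := ENNReal.toReal_mono hU (partVar_add_partVar_le (upIncr_self_nonpos hc) has hst)
  rw [ENNReal.toReal_add (ne_top_of_le_ne_top hU (partVar_mono le_rfl hst)) hUst] at hsuper
  linarith

theorem toReal_UTVc_sub_le (hc : 0 ≤ c) {a s t : ℝ} (has : a ≤ s) (hst : s ≤ t)
    (hU : UTVc f c a t ≠ ⊤) (hD : DTVc f c a t ≠ ⊤) :
    (UTVc f c a t).toReal - (UTVc f c a s).toReal + (f s - f t) - c ≤
      (DTVc f c a t).toReal - (DTVc f c a s).toReal := by
  have := toReal_DTVc_sub_le (f := -f) hc has hst (by rwa [UTVc_neg]) (by rwa [DTVc_neg])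
  simp only [UTVc_neg, DTVc_neg, Pi.neg_apply] at this
  linarith

end Corridor

section Uncross

variable {f : ℝ → ℝ} {c β x : ℝ} {n m : ℕ} {p q : ℕ → ℝ}

theorem ofReal_add_ofReal_le {a b d e : ℝ} (ha : 0 ≤ a) (hb : 0 ≤ b) (h : a + b ≤ d + e) :
    ENNReal.ofReal a + ENNReal.ofReal b ≤ ENNReal.ofReal d + ENNReal.ofReal e := by
  rw [← ENNReal.ofReal_add ha hb]
  exact (ENNReal.ofReal_le_ofReal h).trans ENNReal.ofReal_add_le

theorem uncross_of_disjoint (hc : 0 ≤ c) (hp : IsPart x β (n + 1) p)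
    (ih : partSum (upIncr f c) (fun i => p (i + 1)) n + partSum (downIncr f c) q m ≤
      partVar (absIncr f c) (p 1) β) :
    partSum (upIncr f c) p (n + 1) + partSum (downIncr f c) q m ≤ partVar (absIncr f c) x β := by
  rw [partSum_succ, add_assoc]
  calc _ ≤ ENNReal.ofReal (absIncr f c (p 0) (p 1)) + partVar (absIncr f c) (p 1) β :=
        add_le_add (ENNReal.ofReal_le_ofReal (upIncr_le_absIncr _ _)) ih
    _ ≤ partVar (absIncr f c) x β :=
        ofReal_add_partVar_le (absIncr_self_nonpos hc) (hp.mem (Nat.zero_le _)).1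
          (hp.lt (Nat.succ_pos n)).le (hp.mem (by omega)).2

/-- An up-step `[p 0, p 1]` containing a down-step `[q 0, q 1]` of nonnegative increment is
traded for the steps `p 0 → q 0 → q 1` and the up-step `[q 1, p 1]`. -/
theorem uncross_of_nested (hc : 0 ≤ c) (hp : IsPart x β (n + 1) p) (hq : IsPart x β (m + 1) q)
    (hpq : p 0 ≤ q 0) (hup : 0 ≤ upIncr f c (p 0) (p 1))
    (hdown : 0 ≤ downIncr f c (q 0) (q 1))
    (ih : partSum (upIncr f c) (seqCons (q 1) fun i => p (i + 1)) (n + 1) +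
      partSum (downIncr f c) (fun i => q (i + 1)) m ≤ partVar (absIncr f c) (q 1) β) :
    partSum (upIncr f c) p (n + 1) + partSum (downIncr f c) q (m + 1) ≤
      partVar (absIncr f c) x β := by
  rw [partSum_seqCons] at ih
  rw [partSum_succ, partSum_succ]
  set A := absIncr f c
  have hW := absIncr_self_nonpos (f := f) hc
  have key : ENNReal.ofReal (upIncr f c (p 0) (p 1)) + ENNReal.ofReal (downIncr f c (q 0) (q 1)) ≤
      ENNReal.ofReal (A (p 0) (q 0)) +
        (ENNReal.ofReal (A (q 0) (q 1)) + ENNReal.ofReal (upIncr f c (q 1) (p 1))) := by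
    refine (ofReal_add_ofReal_le hup hdown ?_).trans (by gcongr; exact ENNReal.ofReal_add_le)
    have h1 := upIncr_le_absIncr (f := f) (c := c) (p 0) (q 0)
    have h2 := downIncr_le_absIncr (f := f) (c := c) (q 0) (q 1)
    simp only [upIncr, downIncr] at h1 h2 hdown ⊢
    linarith
  calc _ = (ENNReal.ofReal (upIncr f c (p 0) (p 1)) + ENNReal.ofReal (downIncr f c (q 0) (q 1))) +
        (partSum (upIncr f c) (fun i => p (i + 1)) n +
          partSum (downIncr f c) (fun i => q (i + 1)) m) := by ring
    _ ≤ ENNReal.ofReal (A (p 0) (q 0)) +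
          (ENNReal.ofReal (A (q 0) (q 1)) + partVar A (q 1) β) := by
        grw [key, ← ih]; exact le_of_eq (by ring)
    _ ≤ ENNReal.ofReal (A (p 0) (q 0)) + partVar A (q 0) β := by
        gcongr
        exact ofReal_add_partVar_le hW le_rfl (hq.lt (Nat.succ_pos m)).le (hq.mem (by omega)).2
    _ ≤ partVar A x β :=
        ofReal_add_partVar_le hW (hp.mem (Nat.zero_le _)).1 hpq (hq.mem (Nat.zero_le _)).2

/-- Overlapping steps `p 0 ≤ q 0 ≤ p 1 < q 1` are traded for the step `p 0 → q 0` and the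
down-step `[p 1, q 1]`, which carry the same total increment. -/
theorem uncross_of_straddle (hc : 0 ≤ c) (hp : IsPart x β (n + 1) p) (hq : IsPart x β (m + 1) q)
    (hpq : p 0 ≤ q 0) (hqp : q 0 ≤ p 1) (hup : 0 ≤ upIncr f c (p 0) (p 1))
    (hdown : 0 ≤ downIncr f c (q 0) (q 1))
    (ih : partSum (upIncr f c) (fun i => p (i + 1)) n +
      partSum (downIncr f c) (seqCons (p 1) fun i => q (i + 1)) (m + 1) ≤
        partVar (absIncr f c) (p 1) β) :
    partSum (upIncr f c) p (n + 1) + partSum (downIncr f c) q (m + 1) ≤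
      partVar (absIncr f c) x β := by
  rw [partSum_seqCons] at ih
  rw [partSum_succ, partSum_succ]
  set A := absIncr f c
  have key : ENNReal.ofReal (upIncr f c (p 0) (p 1)) + ENNReal.ofReal (downIncr f c (q 0) (q 1)) ≤
      ENNReal.ofReal (A (p 0) (q 0)) + ENNReal.ofReal (downIncr f c (p 1) (q 1)) := by
    refine ofReal_add_ofReal_le hup hdown ?_
    have := upIncr_le_absIncr (f := f) (c := c) (p 0) (q 0)
    simp only [upIncr, downIncr] at this ⊢
    linarith
  calc _ = (ENNReal.ofReal (upIncr f c (p 0) (p 1)) + ENNReal.ofReal (downIncr f c (q 0) (q 1))) +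
        (partSum (upIncr f c) (fun i => p (i + 1)) n +
          partSum (downIncr f c) (fun i => q (i + 1)) m) := by ring
    _ ≤ ENNReal.ofReal (A (p 0) (q 0)) + partVar A (p 1) β := by
        grw [key, ← ih]; exact le_of_eq (by ring)
    _ ≤ ENNReal.ofReal (A (p 0) (q 0)) + partVar A (q 0) β := by
        gcongr; exact partVar_mono hqp le_rfl
    _ ≤ partVar A x β :=
        ofReal_add_partVar_le (absIncr_self_nonpos hc) (hp.mem (Nat.zero_le _)).1 hpq
          (hq.mem (Nat.zero_le _)).2

theorem uncross_of_le (hc : 0 ≤ c) (hp : IsPart x β (n + 1) p) (hq : IsPart x β (m + 1) q)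
    (hpq : p 0 ≤ q 0) (hup : 0 ≤ upIncr f c (p 0) (p 1))
    (hdown : 0 ≤ downIncr f c (q 0) (q 1))
    (ih : ∀ x n' m' p' q', n' + m' ≤ n + m + 1 → IsPart x β n' p' → IsPart x β m' q' →
      partSum (upIncr f c) p' n' + partSum (downIncr f c) q' m' ≤ partVar (absIncr f c) x β) :
    partSum (upIncr f c) p (n + 1) + partSum (downIncr f c) q (m + 1) ≤
      partVar (absIncr f c) x β := by
  rcases le_or_gt (p 1) (q 0) with hdisj | hqp
  · exact uncross_of_disjoint hc hp (ih _ _ _ _ _ (by omega) hp.tail (hq.of_left_le hdisj))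
  rcases le_or_gt (q 1) (p 1) with hnest | hstrad
  · refine uncross_of_nested hc hp hq hpq hup hdown ?_
    rcases hnest.eq_or_lt with heq | hlt
    · -- the up-step `[q 1, p 1]` is empty
      rw [partSum_seqCons, heq, ENNReal.ofReal_of_nonpos (upIncr_self_nonpos hc _), zero_add]
      exact ih _ _ _ _ _ (by omega) hp.tail (heq ▸ hq.tail)
    · exact ih _ _ _ _ _ (by omega) (hp.tail.cons hlt) hq.tail
  · exact uncross_of_straddle hc hp hq hpq hqp.le hup hdown
      (ih _ _ _ _ _ (by omega) hp.tail (hq.tail.cons hstrad))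

theorem partSum_upIncr_add_partSum_downIncr_le (hc : 0 ≤ c) (hp : IsPart x β n p)
    (hq : IsPart x β m q) :
    partSum (upIncr f c) p n + partSum (downIncr f c) q m ≤ partVar (absIncr f c) x β := by
  induction hN : n + m using Nat.strong_induction_on generalizing f x n m p q with
  | _ N ih =>
    rcases n with _ | n
    · simpa using (partSum_le_partVar hq).trans (partVar_mono_weight downIncr_le_absIncr)
    rcases m with _ | m
    · simpa using (partSum_le_partVar hp).trans (partVar_mono_weight upIncr_le_absIncr)
    have hp1 := hp.mem (by omega : 1 ≤ n + 1)
    have hq1 := hq.mem (by omega : 1 ≤ m + 1)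
    rcases le_or_gt (upIncr f c (p 0) (p 1)) 0 with hup | hup
    · rw [partSum_succ, ENNReal.ofReal_of_nonpos hup, zero_add]
      exact ih _ (by omega) (hp.tail.of_left_le hp1.1) hq rfl
    rcases le_or_gt (downIncr f c (q 0) (q 1)) 0 with hdown | hdown
    · rw [partSum_succ (n := m), ENNReal.ofReal_of_nonpos hdown, zero_add]
      exact ih _ (by omega) hp (hq.tail.of_left_le hq1.1) rfl
    rcases le_total (p 0) (q 0) with hpq | hqp
    · exact uncross_of_le hc hp hq hpq hup.le hdown.le
        fun x n' m' p' q' h hp' hq' => ih _ (by omega) hp' hq' rfl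
    · have := uncross_of_le hc hq hp hqp (f := -f) (by rw [upIncr_neg]; exact hdown.le)
        (by rw [downIncr_neg]; exact hup.le)
        fun x n' m' p' q' h hp' hq' => ih _ (by omega) hp' hq' rfl
      rwa [upIncr_neg, downIncr_neg, absIncr_neg, add_comm] at this

theorem UTVc_add_DTVc_le (hc : 0 ≤ c) (a b : ℝ) :
    UTVc f c a b + DTVc f c a b ≤ TVc f c a b := by
  rw [UTVc_eq_partVar, DTVc_eq_partVar, TVc_eq_partVar]
  refine add_partVar_le (partVar_mono_weight upIncr_le_absIncr) fun m q hq => ?_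
  rw [add_comm]
  refine add_partVar_le ((partSum_le_partVar hq).trans (partVar_mono_weight downIncr_le_absIncr))
    fun n p hp => ?_
  rw [add_comm]
  exact partSum_upIncr_add_partSum_downIncr_le hc hp hq

end Uncross

theorem TVc_le_TVar_add {f h : ℝ → ℝ} {a b c : ℝ}
    (hosc : ∀ s ∈ Set.Icc a b, ∀ u ∈ Set.Icc a b, |h s - h u| ≤ c) :
    TVc f c a b ≤ TVar (fun t => f t + h t) a b := by
  rw [TVc_eq_partVar]
  refine partVar_le fun n t ht =>
    le_trans ?_ (partSum_le_partVar (W := fun x y => dist (f y + h y) (f x + h x)) ht)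
  refine Finset.sum_le_sum fun i hi => ENNReal.ofReal_le_ofReal ?_
  have hi := Finset.mem_range.1 hi
  have hh := hosc _ (ht.mem hi) _ (ht.mem hi.le)
  have htri := abs_sub (f (t (i + 1)) + h (t (i + 1)) - (f (t i) + h (t i)))
    (h (t (i + 1)) - h (t i))
  rw [show f (t (i + 1)) + h (t (i + 1)) - (f (t i) + h (t i)) - (h (t (i + 1)) - h (t i)) =
    f (t (i + 1)) - f (t i) by ring] at htri
  simp only [absIncr, Real.dist_eq]
  linarith

theorem TVar_sub_le_of_monotoneOn {u d : ℝ → ℝ} {a b : ℝ} (hu : MonotoneOn u (Set.Icc a b))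
    (hd : MonotoneOn d (Set.Icc a b)) :
    TVar (fun t => u t - d t) a b ≤ ENNReal.ofReal (u b - u a + (d b - d a)) := by
  refine partVar_le (W := fun x y => dist (u y - d y) (u x - d x)) fun n t ht => ?_
  rw [partSum, ← ENNReal.ofReal_sum_of_nonneg fun _ _ => dist_nonneg]
  refine ENNReal.ofReal_le_ofReal ?_
  have hstep : ∀ i ∈ Finset.range n,
      dist (u (t (i + 1)) - d (t (i + 1))) (u (t i) - d (t i)) ≤
        (u (t (i + 1)) - u (t i)) + (d (t (i + 1)) - d (t i)) := by
    intro i hi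
    have hi := Finset.mem_range.1 hi
    have h1 := hu (ht.mem hi.le) (ht.mem hi) (ht.lt hi).le
    have h2 := hd (ht.mem hi.le) (ht.mem hi) (ht.lt hi).le
    rw [Real.dist_eq, abs_le]
    constructor <;> linarith
  have hab : a ≤ b := ht.1.trans ((ht.mono (Nat.zero_le n) le_rfl).trans ht.2.1)
  have ha : a ∈ Set.Icc a b := ⟨le_rfl, hab⟩
  have hb : b ∈ Set.Icc a b := ⟨hab, le_rfl⟩
  calc _ ≤ _ := Finset.sum_le_sum hstep
    _ = u (t n) - u (t 0) + (d (t n) - d (t 0)) := by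
        rw [Finset.sum_add_distrib, Finset.sum_range_sub (fun i => u (t i)),
          Finset.sum_range_sub (fun i => d (t i))]
    _ ≤ _ := by
        linarith [hu ha (ht.mem (Nat.zero_le n)) ht.1, hu (ht.mem le_rfl) hb ht.2.1,
          hd ha (ht.mem (Nat.zero_le n)) ht.1, hd (ht.mem le_rfl) hb ht.2.1]

theorem exists_osc_le_and_TVar_add_le_TVc {f : ℝ → ℝ} {c : ℝ} (hc : 0 ≤ c) (a b : ℝ) :
    ∃ h : ℝ → ℝ, (∀ s ∈ Set.Icc a b, ∀ u ∈ Set.Icc a b, |h s - h u| ≤ c) ∧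
      TVar (fun t => f t + h t) a b ≤ TVc f c a b := by
  by_cases hfin : TVc f c a b = ⊤
  · exact ⟨0, fun _ _ _ _ => by simpa using hc, hfin ▸ le_top⟩
  rw [TVc_eq_partVar] at hfin
  have hU (t : ℝ) (ht : t ≤ b) : UTVc f c a t ≠ ⊤ := by
    rw [UTVc_eq_partVar]
    exact ne_top_of_le_ne_top hfin
      ((partVar_mono le_rfl ht).trans (partVar_mono_weight upIncr_le_absIncr))
  have hD (t : ℝ) (ht : t ≤ b) : DTVc f c a t ≠ ⊤ := by
    rw [DTVc_eq_partVar]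
    exact ne_top_of_le_ne_top hfin
      ((partVar_mono le_rfl ht).trans (partVar_mono_weight downIncr_le_absIncr))
  set u := fun t => (UTVc f c a t).toReal
  set d := fun t => (DTVc f c a t).toReal
  refine ⟨fun t => u t - d t - f t, fun s hs t ht => ?_, ?_⟩
  · wlog hst : s ≤ t generalizing s t
    · rw [abs_sub_comm]; exact this t ht s hs (le_of_not_ge hst)
    have h1 := toReal_DTVc_sub_le hc hs.1 hst (hU t ht.2) (hD t ht.2)
    have h2 := toReal_UTVc_sub_le hc hs.1 hst (hU t ht.2) (hD t ht.2)
    rw [abs_le]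
    constructor <;> linarith
  have hu : MonotoneOn u (Set.Icc a b) := fun x _ y hy hxy => by
    refine ENNReal.toReal_mono (hU y hy.2) ?_
    rw [UTVc_eq_partVar, UTVc_eq_partVar]
    exact partVar_mono le_rfl hxy
  have hd : MonotoneOn d (Set.Icc a b) := fun x _ y hy hxy => by
    refine ENNReal.toReal_mono (hD y hy.2) ?_
    rw [DTVc_eq_partVar, DTVc_eq_partVar]
    exact partVar_mono le_rfl hxy
  calc TVar (fun t => f t + (u t - d t - f t)) a b = TVar (fun t => u t - d t) a b := by
        simp only [add_sub_cancel]
    _ ≤ ENNReal.ofReal (u b - u a + (d b - d a)) := TVar_sub_le_of_monotoneOn hu hd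
    _ ≤ ENNReal.ofReal (u b) + ENNReal.ofReal (d b) := by
        have : 0 ≤ u a ∧ 0 ≤ d a := ⟨ENNReal.toReal_nonneg, ENNReal.toReal_nonneg⟩
        exact (ENNReal.ofReal_le_ofReal (by linarith)).trans ENNReal.ofReal_add_le
    _ = UTVc f c a b + DTVc f c a b := by
        simp only [u, d, ENNReal.ofReal_toReal (hU b le_rfl), ENNReal.ofReal_toReal (hD b le_rfl)]
    _ ≤ TVc f c a b := UTVc_add_DTVc_le hc a b

theorem inf_tv_osc_general (a b : ℝ) (f : ℝ → ℝ) (c : ℝ) (hc : 0 < c) :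
    (∃ h : ℝ → ℝ, (∀ s ∈ Set.Icc a b, ∀ u ∈ Set.Icc a b, |h s - h u| ≤ c) ∧
        TVar (fun t => f t + h t) a b = TVc f c a b) ∧
    (∀ h : ℝ → ℝ, (∀ s ∈ Set.Icc a b, ∀ u ∈ Set.Icc a b, |h s - h u| ≤ c) →
        TVc f c a b ≤ TVar (fun t => f t + h t) a b) := by
  obtain ⟨h, hosc, hle⟩ := exists_osc_le_and_TVar_add_le_TVc (f := f) hc.le a b
  exact ⟨⟨h, hosc, le_antisymm hle (TVc_le_TVar_add hosc)⟩,
    fun _ hosc => TVc_le_TVar_add hosc⟩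

/-- The infimum of `TV(f+h,[a,b])` over `h` with oscillation at most `c`
equals `TV^c(f,[a,b])`, and it is attained. -/
theorem inf_tv_osc (a b : ℝ) (hab : a < b) (f : ℝ → ℝ)
    (hf : Cadlag f a b) (c : ℝ) (hc : 0 < c) :
    (∃ h : ℝ → ℝ, (∀ s ∈ Set.Icc a b, ∀ u ∈ Set.Icc a b, |h s - h u| ≤ c) ∧
        TVar (fun t => f t + h t) a b = TVc f c a b) ∧
    (∀ h : ℝ → ℝ, (∀ s ∈ Set.Icc a b, ∀ u ∈ Set.Icc a b, |h s - h u| ≤ c) →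
        TVc f c a b ≤ TVar (fun t => f t + h t) a b) :=
  inf_tv_osc_general a b f c hc
end
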